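/- Pointwise version of the Bregman identity with priors: for a differentiable convex f : ℝ^{k-1} → ℝ, prior π with all π_i > 0, and positive density-ratio vectors r, r̂ ∈ ℝ_{>0}^{k-1}, define η = Ψ_dr^{-1}(r) and η̂ = Ψ_dr^{-1}(r̂) (with r_k = r̂_k = 1). Then B_f(η_{[1:k-1]}, η̂_{[1:k-1]}) = (π_k / (π_k + Σ_{i∈[k-1]} π_i r_i)) · B_{f*_π}(r, r̂), where f*_π(r) := (1 + Σ_i π_i r_i/π_k) · f(π_{[1:k-1]}∘r / (π_k + Σ_i π_i r_i)). -/

import Mathlib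

/-!
Up to the factor `1 / π_k`, `f*_π` is the perspective `P(x, t) = t f(x / t)` of `f` composed
with the affine map `s ↦ (π ∘ s, π_k + Σ_i π_i s_i)`, and `η = x / t` at the image of `r`.
Bregman divergences commute with affine substitutions and scale with constant factors, and
for the perspective `B_P((x, t), (x̂, t̂)) = t · B_f(x / t, x̂ / t̂)`.
-/

open ContinuousLinearMap

section Bregman

variable {E F : Type*} [NormedAddCommGroup E] [NormedSpace ℝ E]
  [NormedAddCommGroup F] [NormedSpace ℝ F]

noncomputable def bregman (φ : E → ℝ) (x y : E) : ℝ :=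
  φ x - φ y - fderiv ℝ φ y (x - y)

theorem bregman_const_smul (c : ℝ) (φ : E → ℝ) (x y : E) :
    bregman (c • φ) x y = c * bregman φ x y := by
  simp only [bregman, fderiv_const_smul_field, Pi.smul_apply, smul_apply, smul_eq_mul]
  ring

theorem bregman_comp_add_const {φ : F → ℝ} (L : E →L[ℝ] F) (b : F) {x y : E}
    (hφ : DifferentiableAt ℝ φ (L y + b)) :
    bregman (fun z => φ (L z + b)) x y = bregman φ (L x + b) (L y + b) := by
  have hD : HasFDerivAt (fun z => φ (L z + b)) ((fderiv ℝ φ (L y + b)).comp L) y :=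
    hφ.hasFDerivAt.comp y (L.hasFDerivAt.add_const b)
  simp only [bregman, hD.fderiv, comp_apply, map_sub, add_sub_add_right_eq_sub]

noncomputable def perspective (f : E → ℝ) (p : E × ℝ) : ℝ :=
  p.2 * f (p.2⁻¹ • p.1)

theorem differentiableAt_perspective {f : E → ℝ} {x : E} {t : ℝ} (ht : t ≠ 0)
    (hf : DifferentiableAt ℝ f (t⁻¹ • x)) : DifferentiableAt ℝ (perspective f) (x, t) :=
  differentiableAt_snd.mul
    (hf.comp (x, t) ((differentiableAt_snd.inv ht).smul differentiableAt_fst))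

theorem bregman_perspective {f : E → ℝ} {x y : E} {s t : ℝ} (hs : s ≠ 0) (ht : t ≠ 0)
    (hf : DifferentiableAt ℝ f (t⁻¹ • y)) :
    bregman (perspective f) (x, s) (y, t) = s * bregman f (s⁻¹ • x) (t⁻¹ • y) := by
  -- with `x = s • u` and `y = t • v` the identity is linear in `f' u` and `f' v`
  obtain ⟨u, rfl⟩ : ∃ u, x = s • u := ⟨s⁻¹ • x, (smul_inv_smul₀ hs x).symm⟩
  obtain ⟨v, rfl⟩ : ∃ v, y = t • v := ⟨t⁻¹ • y, (smul_inv_smul₀ ht y).symm⟩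
  rw [inv_smul_smul₀ ht] at hf
  have hf' : HasFDerivAt f (fderiv ℝ f v) ((t • v, t).2⁻¹ • (t • v, t).1) := by
    simpa only [inv_smul_smul₀ ht] using hf.hasFDerivAt
  have hD : HasFDerivAt (perspective f) _ (t • v, t) := hasFDerivAt_snd.mul
    (hf'.comp (t • v, t) (((hasFDerivAt_inv ht).comp _ hasFDerivAt_snd).smul hasFDerivAt_fst))
  simp only [bregman, perspective, hD.fderiv, inv_smul_smul₀ hs, inv_smul_smul₀ ht, comp_add,
    comp_smulₛₗ, map_inv₀, Real.ringHom_apply, smul_add, Prod.mk_sub_mk, add_apply,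
    smul_apply, comp_apply, coe_fst', map_sub, map_smul, smul_eq_mul, smulRight_apply,
    coe_snd', toSpanSingleton_apply, mul_neg]
  field_simp
  ring

end Bregman

theorem stmt_9_general (n : ℕ) (f : (Fin n → ℝ) → ℝ)
    (hdiff : Differentiable ℝ f)
    (π : Fin (n+1) → ℝ) (hπ : ∀ i, 0 < π i)
    (r rhat : Fin n → ℝ) (hr : ∀ i, 0 < r i) (hrhat : ∀ i, 0 < rhat i)
    (η ηhat : Fin n → ℝ)
    (hη : ∀ i, η i = π i.castSucc * r i /
      (π (Fin.last n) + ∑ j, π j.castSucc * r j))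
    (hηhat : ∀ i, ηhat i = π i.castSucc * rhat i /
      (π (Fin.last n) + ∑ j, π j.castSucc * rhat j))
    (fπ : (Fin n → ℝ) → ℝ)
    (hfπ : ∀ s, fπ s = (1 + ∑ i, π i.castSucc * s i / π (Fin.last n)) *
      f (fun i => π i.castSucc * s i / (π (Fin.last n) + ∑ j, π j.castSucc * s j)))
    (B : ((Fin n → ℝ) → ℝ) → (Fin n → ℝ) → (Fin n → ℝ) → ℝ)
    (hB : ∀ φ x y, B φ x y = φ x - φ y - fderiv ℝ φ y (x - y)) :
    B f η ηhat
      = (π (Fin.last n) / (π (Fin.last n) + ∑ i, π i.castSucc * r i))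
          * B fπ r rhat := by
  set c := π (Fin.last n)
  have hc : c ≠ 0 := (hπ _).ne'
  set T : (Fin n → ℝ) → ℝ := fun s => c + ∑ j, π j.castSucc * s j
  have hT : ∀ s : Fin n → ℝ, (∀ i, 0 < s i) → T s ≠ 0 := fun s hs =>
    (add_pos_of_pos_of_nonneg (hπ _)
      (Finset.sum_nonneg fun j _ => (mul_pos (hπ _) (hs j)).le)).ne'
  let A : (Fin n → ℝ) →L[ℝ] (Fin n → ℝ) × ℝ :=
    (pi fun i => π i.castSucc • proj i).prod (∑ i, π i.castSucc • proj i)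
  have hA : ∀ s, A s + (0, c) = (fun i => π i.castSucc * s i, T s) := by
    intro s
    simp [A, T, add_comm]
  have hratio : ∀ s,
      (fun i => π i.castSucc * s i / T s) = (T s)⁻¹ • fun i => π i.castSucc * s i :=
    fun s => funext fun i => div_eq_inv_mul _ _
  have hfπ_persp : fπ = c⁻¹ • fun s => perspective f (A s + (0, c)) := by
    funext s
    simp only [hfπ, hA, perspective, Pi.smul_apply, smul_eq_mul, ← hratio, ← Finset.sum_div]
    field_simp
    rfl
  have hηr : η = (T r)⁻¹ • fun i => π i.castSucc * r i := (funext hη).trans (hratio r)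
  have hηrhat : ηhat = (T rhat)⁻¹ • fun i => π i.castSucc * rhat i :=
    (funext hηhat).trans (hratio rhat)
  have hB_eq : B = bregman := by ext; exact hB ..
  have hf_at : DifferentiableAt ℝ f ((T rhat)⁻¹ • fun i => π i.castSucc * rhat i) :=
    hdiff.differentiableAt
  rw [hB_eq, hfπ_persp, bregman_const_smul, bregman_comp_add_const _ _ (by
      rw [hA]; exact differentiableAt_perspective (hT rhat hrhat) hf_at),
    hA, hA, bregman_perspective (hT r hr) (hT rhat hrhat) hf_at, ← hηr, ← hηrhat]
  change _ = c / T r * _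
  field_simp [hT r hr]

/-- Pointwise Bregman identity with priors:
`B_f(η, η̂) = (π_k / (π_k + Σ_i π_i r_i)) · B_{f*_π}(r, r̂)` where
`η = Ψ_dr^{-1}(r)`, `η̂ = Ψ_dr^{-1}(r̂)` and
`f*_π(r) = (1 + Σ_i π_i r_i/π_k) · f(π∘r / (π_k + Σ_i π_i r_i))`. -/
theorem stmt_9 (n : ℕ) (f : (Fin n → ℝ) → ℝ)
    (hconv : ConvexOn ℝ Set.univ f) (hdiff : Differentiable ℝ f)
    (π : Fin (n+1) → ℝ) (hπ : ∀ i, 0 < π i)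
    (r rhat : Fin n → ℝ) (hr : ∀ i, 0 < r i) (hrhat : ∀ i, 0 < rhat i)
    (η ηhat : Fin n → ℝ)
    (hη : ∀ i, η i = π i.castSucc * r i /
      (π (Fin.last n) + ∑ j, π j.castSucc * r j))
    (hηhat : ∀ i, ηhat i = π i.castSucc * rhat i /
      (π (Fin.last n) + ∑ j, π j.castSucc * rhat j))
    (fπ : (Fin n → ℝ) → ℝ)
    (hfπ : ∀ s, fπ s = (1 + ∑ i, π i.castSucc * s i / π (Fin.last n)) *
      f (fun i => π i.castSucc * s i / (π (Fin.last n) + ∑ j, π j.castSucc * s j)))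
    (B : ((Fin n → ℝ) → ℝ) → (Fin n → ℝ) → (Fin n → ℝ) → ℝ)
    (hB : ∀ φ x y, B φ x y = φ x - φ y - fderiv ℝ φ y (x - y)) :
    B f η ηhat
      = (π (Fin.last n) / (π (Fin.last n) + ∑ i, π i.castSucc * r i))
          * B fπ r rhat :=
  stmt_9_general n f hdiff π hπ r rhat hr hrhat η ηhat hη hηhat fπ hfπ B hB
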